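/- arXiv:math/0701232 — 2 statements merged into one kernel-verified Lean document; each statement's English description precedes it below -/
import Mathlib

section
/- For every positive integer n, the number of even elements of lspec(n) is at most the number of odd elements of lspec(n); that is, the number of even decompositions of n is at most the number of its odd decompositions. -/
/-- The length spectrum of `n`: the set of lengths `l` of decompositions of `n`,
i.e. sequences `a, a+1, ..., a+(l-1)` of `l ≥ 1` consecutive positive integers summing to `n`. -/
def lspec (n : ℕ) : Set ℕ :=
  {l | 0 < l ∧ ∃ a : ℕ, 0 < a ∧ ∑ i ∈ Finset.range l, (a + i) = n}

/-- `A₀`: the even elements of `A`. -/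
def evens (A : Set ℕ) : Set ℕ := {x ∈ A | Even x}

/-- `A₁`: the odd elements of `A`. -/
def odds (A : Set ℕ) : Set ℕ := {x ∈ A | Odd x}

/-- The spectral class of `n`: positive integers with the same length spectrum as `n`. -/
def specClass (n : ℕ) : Set ℕ := {m | 0 < m ∧ lspec m = lspec n}

/-- A set is balanced if it has equally many even and odd elements. -/
def balancedSet (S : Set ℕ) : Prop := (evens S).encard = (odds S).encard

/-- A set is unmixed if it has no even elements. -/
def unmixedSet (S : Set ℕ) : Prop := evens S = ∅

/-- A set is lopsided if it is neither balanced nor unmixed. -/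
def lopsidedSet (S : Set ℕ) : Prop := ¬ balancedSet S ∧ ¬ unmixedSet S

/-- The set of ratios `m'/m` over pairs of complementary factors `m ≤ m'` of `k`;
`q(k)` is the least element of this set. -/
def qSet (k : ℕ) : Set ℚ :=
  {r | ∃ m m' : ℕ, 0 < m ∧ m ≤ m' ∧ m * m' = k ∧ r = (m' : ℚ) / (m : ℚ)}

/-- The exceptional set `E(S)`: numbers `a = b·c` with `b, c ∈ S₁`, `a > max S₀`, and
whose set of divisors of `(max S₁)·a` strictly below `a` is exactly `S₁`. -/
def excSet (S : Set ℕ) : Set ℕ :=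
  {a | (∃ b ∈ odds S, ∃ c ∈ odds S, a = b * c) ∧ sSup (evens S) < a ∧
    {d | d ∣ sSup (odds S) * a ∧ d < a} = odds S}

/-- `P(S)`: the primes strictly greater than `max S₀`. -/
def primesAbove (S : Set ℕ) : Set ℕ := {p | p.Prime ∧ sSup (evens S) < p}

/-- A balanced spectrum is non-excessive if `S₁` is exactly the set of divisors of `max S₁`. -/
def nonExcessive (S : Set ℕ) : Prop := odds S = {d | d ∣ sSup (odds S)}

/-- `γ_p`: the largest `k` with `p^k ∈ S₁`. -/
noncomputable def gammaIdx (S : Set ℕ) (p : ℕ) : ℕ := sSup {k | p ^ k ∈ odds S}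

/-- `μ_p = v_p(max S₁)`. -/
noncomputable def muIdx (S : Set ℕ) (p : ℕ) : ℕ := (sSup (odds S)).factorization p

/-- The excessive index `ε_p = γ_p − μ_p` of a prime `p` with respect to `S`. -/
noncomputable def excIdx (S : Set ℕ) (p : ℕ) : ℕ := gammaIdx S p - muIdx S p

/-- The difference set `D(S)`: `S₁` with its `|S₀|` smallest elements removed when
`|S₀| ≤ |S₁|`, and empty otherwise.  An element `x` of `S₁` survives exactly when at least
`|S₀|` elements of `S₁` lie strictly below it. -/
def diffSet (S : Set ℕ) : Set ℕ :=
  {x ∈ odds S | (evens S).encard ≤ {y ∈ odds S | y < x}.encard}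
lemma mem_lspec_iff {n l : ℕ} (hn : 0 < n) :
    l ∈ lspec n ↔ ∃ m, l * m = 2 * n ∧ l < m ∧ Odd (l + m) := by
  constructor
  · rintro ⟨hl, a, ha, hsum⟩
    refine ⟨2 * a + l - 1, ?_, by omega, ⟨a + l - 1, by omega⟩⟩
    have hs : ∑ i ∈ Finset.range l, (a + i) = l * a + ∑ i ∈ Finset.range l, i := by
      rw [Finset.sum_add_distrib, Finset.sum_const, Finset.card_range, smul_eq_mul]
    have h2 : (∑ i ∈ Finset.range l, i) * 2 = l * (l - 1) := Finset.sum_range_id_mul_two l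
    have h2n : 2 * n = 2 * (l * a) + l * (l - 1) := by rw [← hsum, hs]; omega
    have hexp : l * (2 * a + l - 1) = l * (2 * a + (l - 1)) := by congr 1; omega
    rw [hexp, Nat.mul_add]
    have : l * (2 * a) = 2 * (l * a) := by ring
    omega
  · rintro ⟨m, hm, hlt, k, hk⟩
    have hl : 0 < l := by
      rcases Nat.eq_zero_or_pos l with h | h
      · simp [h] at hm; omega
      · exact h
    refine ⟨hl, (m + 1 - l) / 2, by omega, ?_⟩
    have hs : ∑ i ∈ Finset.range l, ((m + 1 - l) / 2 + i)
        = l * ((m + 1 - l) / 2) + ∑ i ∈ Finset.range l, i := by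
      rw [Finset.sum_add_distrib, Finset.sum_const, Finset.card_range, smul_eq_mul]
    have h2 : (∑ i ∈ Finset.range l, i) * 2 = l * (l - 1) := Finset.sum_range_id_mul_two l
    have h2a : 2 * ((m + 1 - l) / 2) = m + 1 - l := by omega
    have hmul : 2 * (l * ((m + 1 - l) / 2)) = l * (m + 1 - l) := by
      rw [← Nat.mul_assoc, Nat.mul_comm 2 l, Nat.mul_assoc, h2a]
    have ht : m + 1 - l + (l - 1) = m := by omega
    have key : l * (m + 1 - l) + l * (l - 1) = 2 * n := by
      rw [← Nat.mul_add, ht]; exact hm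
    omega

/-- The number of even elements of `lspec n` is at most the number of its odd elements. -/
theorem card_evens_le_card_odds (n : ℕ) (hn : 0 < n) :
    (evens (lspec n)).encard ≤ (odds (lspec n)).encard := by
  have key : ∀ l ∈ evens (lspec n),
      l.factorization 2 = (2 * n).factorization 2 ∧ ordCompl[2] l ∈ odds (lspec n) := by
    rintro l ⟨hls, hle⟩
    obtain ⟨m, hm, hlt, hodd⟩ := (mem_lspec_iff hn).mp hls
    have hl0 : 0 < l := hls.1
    have hm0 : 0 < m := by omega
    have hlmod : l % 2 = 0 := Nat.even_iff.mp hle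
    have hlmmod : (l + m) % 2 = 1 := Nat.odd_iff.mp hodd
    have hmmod : m % 2 = 1 := by omega
    have h2m : ¬ 2 ∣ m := by omega
    have h2l : 2 ∣ l := by omega
    have hkpos : 0 < l.factorization 2 :=
      Nat.Prime.factorization_pos_of_dvd Nat.prime_two hl0.ne' h2l
    have hlval : 2 ^ l.factorization 2 * ordCompl[2] l = l :=
      Nat.ordProj_mul_ordCompl_eq_self l 2
    have hdodd : Odd (ordCompl[2] l) := by
      have h := Nat.not_dvd_ordCompl Nat.prime_two hl0.ne'
      rw [Nat.odd_iff]; omega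
    constructor
    · rw [← hm, Nat.factorization_mul hl0.ne' hm0.ne']
      simp [Nat.factorization_eq_zero_of_not_dvd h2m]
    · refine ⟨(mem_lspec_iff hn).mpr ⟨2 ^ l.factorization 2 * m, ?_, ?_, ?_⟩, hdodd⟩
      · calc ordCompl[2] l * (2 ^ l.factorization 2 * m)
            = 2 ^ l.factorization 2 * ordCompl[2] l * m := by ring
          _ = l * m := by rw [hlval]
          _ = 2 * n := hm
      · have hd_le : ordCompl[2] l ≤ l := Nat.ordCompl_le l 2
        have hd_ne : ordCompl[2] l ≠ l := by
          intro h
          have : l % 2 = 1 := Nat.odd_iff.mp (h ▸ hdodd)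
          omega
        have h1 : m ≤ 2 ^ l.factorization 2 * m :=
          Nat.le_mul_of_pos_left m (Nat.pow_pos (by norm_num))
        omega
      · have h2km : 2 ∣ 2 ^ l.factorization 2 * m :=
          Dvd.dvd.mul_right (dvd_pow_self 2 hkpos.ne') m
        have := Nat.odd_iff.mp hdodd
        rw [Nat.odd_iff]; omega
  have hinj : Set.InjOn (fun l => ordCompl[2] l) (evens (lspec n)) := by
    intro l1 h1 l2 h2 heq
    obtain ⟨hv1, -⟩ := key l1 h1
    obtain ⟨hv2, -⟩ := key l2 h2
    have e1 : 2 ^ (l1.factorization 2) * ordCompl[2] l1 = l1 :=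
      Nat.ordProj_mul_ordCompl_eq_self l1 2
    have e2 : 2 ^ (l2.factorization 2) * ordCompl[2] l2 = l2 :=
      Nat.ordProj_mul_ordCompl_eq_self l2 2
    simp only at heq
    rw [← e1, ← e2, heq, hv1, hv2]
  have himg : (fun l => ordCompl[2] l) '' evens (lspec n) ⊆ odds (lspec n) := by
    rintro _ ⟨l, hl, rfl⟩
    exact (key l hl).2
  calc (evens (lspec n)).encard
      = ((fun l => ordCompl[2] l) '' evens (lspec n)).encard := (hinj.encard_image).symm
    _ ≤ (odds (lspec n)).encard := Set.encard_mono himg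
end

section
/- Let n be a positive integer such that S = lspec(n) is balanced, and let m₀ = max S₀. Then (m₀/2)·E(S) ⊆ L(n) ⊆ (m₀/2)·(P(S) ∪ E(S)). -/
lemma sum_consec (l a : ℕ) :
    2 * ∑ i ∈ Finset.range l, (a + i) = 2 * (l * a) + l * (l - 1) := by
  have h := Finset.sum_range_id_mul_two l
  rw [Finset.sum_add_distrib, Finset.sum_const, Finset.card_range, smul_eq_mul]
  omega

lemma lspec_mem_iff {n : ℕ} (hn : 0 < n) (l : ℕ) :
    l ∈ lspec n ↔ ∃ k, l < k ∧ l * k = 2 * n ∧ (Odd l ∨ Odd k) := by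
  constructor
  · rintro ⟨hl, a, ha, hsum⟩
    obtain ⟨l', rfl⟩ : ∃ l', l = l' + 1 := ⟨l - 1, by omega⟩
    have h := sum_consec (l' + 1) a
    rw [hsum] at h
    simp only [Nat.add_sub_cancel] at h
    refine ⟨2 * a + l', by omega, ?_, ?_⟩
    · have : (l' + 1) * (2 * a + l') = 2 * ((l' + 1) * a) + (l' + 1) * l' := by ring
      omega
    · simp only [Nat.odd_iff]; omega
  · rintro ⟨k, hlk, hmul, hpar⟩
    have hl : 0 < l := by
      rcases Nat.eq_zero_or_pos l with h | h
      · subst h; simp at hmul; omega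
      · exact h
    obtain ⟨l', rfl⟩ : ∃ l', l = l' + 1 := ⟨l - 1, by omega⟩
    have hkodd : ¬ (Odd (l' + 1) ∧ Odd k) := by
      rintro ⟨⟨x, hx⟩, ⟨y, hy⟩⟩
      have : (l' + 1) * k = 2 * (2 * x * y + x + y) + 1 := by rw [hx, hy]; ring
      omega
    have hpar2 : (l' + 1 + k) % 2 = 1 := by
      simp only [Nat.odd_iff] at hpar hkodd; omega
    refine ⟨Nat.succ_pos l', (k + 1 - (l' + 1)) / 2, by omega, ?_⟩
    have h2a : 2 * ((k + 1 - (l' + 1)) / 2) = k - l' := by omega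
    have h := sum_consec (l' + 1) ((k + 1 - (l' + 1)) / 2)
    simp only [Nat.add_sub_cancel] at h
    have hk : k = 2 * ((k + 1 - (l' + 1)) / 2) + l' := by omega
    have hid : (l' + 1) * (2 * ((k + 1 - (l' + 1)) / 2) + l')
        = 2 * ((l' + 1) * ((k + 1 - (l' + 1)) / 2)) + (l' + 1) * l' := by ring
    rw [hk] at hmul
    omega


lemma odd_of_dvd_odd {d q : ℕ} (h : d ∣ q) (hq : Odd q) : Odd d := by
  rcases Nat.even_or_odd d with he | ho
  · exfalso
    have h2 : 2 ∣ q := dvd_trans he.two_dvd h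
    rw [Nat.odd_iff] at hq; omega
  · exact ho

lemma lspec_odd_iff {n s q : ℕ} (hn : 0 < n) (hs : 1 ≤ s) (hq : Odd q)
    (h2n : 2 * n = 2 ^ s * q) {l : ℕ} (hl : Odd l) :
    l ∈ lspec n ↔ l ∣ q ∧ l * l < 2 ^ s * q := by
  rw [lspec_mem_iff hn, h2n]
  constructor
  · rintro ⟨k, hlk, hmul, -⟩
    have hdvd : l ∣ 2 ^ s * q := ⟨k, hmul.symm⟩
    have hcop : Nat.Coprime l (2 ^ s) :=
      Nat.Coprime.pow_right _ (hl.coprime_two_right)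
    refine ⟨hcop.dvd_of_dvd_mul_left hdvd, ?_⟩
    calc l * l < l * k := (Nat.mul_lt_mul_left hl.pos).mpr hlk
      _ = 2 ^ s * q := hmul
  · rintro ⟨hdvd, hlt⟩
    have hl0 : 0 < l := hl.pos
    have hmul : l * (2 ^ s * (q / l)) = 2 ^ s * q := by
      rw [mul_comm l, mul_assoc, Nat.div_mul_cancel hdvd]
    refine ⟨2 ^ s * (q / l), ?_, hmul, Or.inl hl⟩
    have := hlt
    rw [← hmul] at this
    exact Nat.lt_of_mul_lt_mul_left this

lemma lspec_even_iff {n s q : ℕ} (hn : 0 < n) (hs : 1 ≤ s) (hq : Odd q)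
    (h2n : 2 * n = 2 ^ s * q) {l : ℕ} (hl : Even l) :
    l ∈ lspec n ↔ ∃ d, d ∣ q ∧ l = 2 ^ s * d ∧ 2 ^ s * (d * d) < q := by
  have hq0 : 0 < q := hq.pos
  rw [lspec_mem_iff hn, h2n]
  constructor
  · rintro ⟨k, hlk, hmul, hpar⟩
    have hk : Odd k := by
      rcases hpar with h | h
      · exact absurd h (by simpa [Nat.even_iff, Nat.odd_iff] using hl)
      · exact h
    have hkdvd : k ∣ 2 ^ s * q := ⟨l, by rw [← hmul]; ring⟩
    have hcop : Nat.Coprime k (2 ^ s) :=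
      Nat.Coprime.pow_right _ (hk.coprime_two_right)
    have hkq : k ∣ q := hcop.dvd_of_dvd_mul_left hkdvd
    have hk0 : 0 < k := hk.pos
    refine ⟨q / k, Nat.div_dvd_of_dvd hkq, ?_, ?_⟩
    · have h1 : l * k = (2 ^ s * (q / k)) * k := by
        rw [hmul, mul_assoc, mul_comm (q / k), Nat.mul_div_cancel' hkq]
      exact Nat.eq_of_mul_eq_mul_right hk0 h1
    · have hd0 : 0 < q / k := Nat.div_pos (Nat.le_of_dvd hq0 hkq) hk0
      have h2 : l * (q / k) < k * (q / k) :=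
        (Nat.mul_lt_mul_right hd0).mpr hlk
      rw [mul_comm k, Nat.div_mul_cancel hkq] at h2
      calc 2 ^ s * (q / k * (q / k)) = l * (q / k) := by
            rcases (Nat.eq_of_mul_eq_mul_right hk0 (by
              rw [hmul, mul_assoc, mul_comm (q / k), Nat.mul_div_cancel' hkq] :
                l * k = (2 ^ s * (q / k)) * k)) with h3
            rw [h3]; ring
        _ < q := h2
  · rintro ⟨d, hd, rfl, hlt⟩
    have hd0 : 0 < d := Nat.pos_of_dvd_of_pos hd hq0
    have hmul : (2 ^ s * d) * (q / d) = 2 ^ s * q := by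
      rw [mul_assoc, Nat.mul_div_cancel' hd]
    refine ⟨q / d, ?_, hmul, Or.inr (odd_of_dvd_odd (Nat.div_dvd_of_dvd hd) hq)⟩
    have h2 : (2 ^ s * d) * d < (q / d) * d := by
      rw [Nat.div_mul_cancel hd]
      calc 2 ^ s * d * d = 2 ^ s * (d * d) := by ring
        _ < q := hlt
    exact Nat.lt_of_mul_lt_mul_right h2

lemma odds_lspec_eq {n s q : ℕ} (hn : 0 < n) (hs : 1 ≤ s) (hq : Odd q)
    (h2n : 2 * n = 2 ^ s * q) :
    odds (lspec n) = {l | Odd l ∧ l ∣ q ∧ l * l < 2 ^ s * q} := by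
  ext l
  simp only [odds, Set.mem_setOf_eq, Set.mem_sep_iff]
  constructor
  · rintro ⟨hmem, hodd⟩
    exact ⟨hodd, (lspec_odd_iff hn hs hq h2n hodd).mp hmem⟩
  · rintro ⟨hodd, h⟩
    exact ⟨(lspec_odd_iff hn hs hq h2n hodd).mpr h, hodd⟩

lemma evens_lspec_eq {n s q : ℕ} (hn : 0 < n) (hs : 1 ≤ s) (hq : Odd q)
    (h2n : 2 * n = 2 ^ s * q) :
    evens (lspec n) = (fun d => 2 ^ s * d) '' {d | d ∣ q ∧ 2 ^ s * (d * d) < q} := by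
  ext l
  simp only [evens, Set.mem_setOf_eq, Set.mem_sep_iff, Set.mem_image]
  constructor
  · rintro ⟨hmem, heven⟩
    obtain ⟨d, hd, rfl, hlt⟩ := (lspec_even_iff hn hs hq h2n heven).mp hmem
    exact ⟨d, ⟨hd, hlt⟩, rfl⟩
  · rintro ⟨d, ⟨hd, hlt⟩, rfl⟩
    have heven : Even (2 ^ s * d) := by
      have : 2 ∣ 2 ^ s := dvd_pow_self 2 (by omega)
      exact (even_iff_two_dvd).mpr (dvd_mul_of_dvd_left this d)
    exact ⟨(lspec_even_iff hn hs hq h2n heven).mpr ⟨d, hd, rfl, hlt⟩, heven⟩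


lemma odds_union_evens (A : Set ℕ) : odds A ∪ evens A = A := by
  ext x
  simp only [Set.mem_union, odds, evens, Set.mem_sep_iff]
  rcases Nat.even_or_odd x with h | h
  · tauto
  · tauto

lemma exists_two_pow (m : ℕ) (hm : 0 < m) :
    ∃ s q, 1 ≤ s ∧ Odd q ∧ 2 * m = 2 ^ s * q := by
  obtain ⟨s, q, hq, hmq⟩ :=
    Nat.exists_eq_pow_mul_and_not_dvd (n := 2 * m) (by omega) 2 (by norm_num)
  refine ⟨s, q, ?_, Nat.odd_iff.mpr (by omega), hmq⟩
  rcases Nat.eq_zero_or_pos s with rfl | h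
  · simp at hmq; omega
  · exact h

lemma balanced_structure {n s q : ℕ} (hn : 0 < n) (hs : 1 ≤ s) (hq : Odd q)
    (h2n : 2 * n = 2 ^ s * q) (hb : balancedSet (lspec n)) :
    sSup (odds (lspec n)) ∈ odds (lspec n) ∧
    odds (lspec n) = {d | d ∣ q ∧ 2 ^ s * (d * d) < q} ∧
    q = sSup (odds (lspec n)) * (q / sSup (odds (lspec n))) ∧
    2 ^ s * sSup (odds (lspec n)) < q / sSup (odds (lspec n)) ∧
    {d | d ∣ q ∧ d < q / sSup (odds (lspec n))} = odds (lspec n) ∧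
    sSup (evens (lspec n)) = 2 ^ s * sSup (odds (lspec n)) := by
  have hq0 : 0 < q := hq.pos
  have h2s : 2 ≤ 2 ^ s := by
    calc 2 = 2 ^ 1 := rfl
    _ ≤ 2 ^ s := Nat.pow_le_pow_right (by norm_num) hs
  have hodds := odds_lspec_eq hn hs hq h2n
  have hevens := evens_lspec_eq hn hs hq h2n
  set S₁ := odds (lspec n) with hS₁
  set B := {d | d ∣ q ∧ 2 ^ s * (d * d) < q} with hB
  -- finiteness and nonemptiness
  have hfin : S₁.Finite := by
    apply (Set.finite_Iic q).subset
    intro x hx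
    rw [hodds] at hx
    exact Set.mem_Iic.mpr (Nat.le_of_dvd hq0 hx.2.1)
  have hone : 1 ∈ S₁ := by
    rw [hodds]
    exact ⟨odd_one, one_dvd q, by nlinarith⟩
  have hne : S₁.Nonempty := ⟨1, hone⟩
  have hbdd : BddAbove S₁ := by
    refine ⟨q, fun x hx => ?_⟩
    rw [hodds] at hx
    exact Nat.le_of_dvd hq0 hx.2.1
  have hm₁mem : sSup S₁ ∈ S₁ := hne.csSup_mem hfin
  set m₁ := sSup S₁ with hm₁def
  have hm₁odd : Odd m₁ := by rw [hodds] at hm₁mem; exact hm₁mem.1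
  have hm₁dvd : m₁ ∣ q := by rw [hodds] at hm₁mem; exact hm₁mem.2.1
  have hm₁0 : 0 < m₁ := hm₁odd.pos
  -- B ⊆ S₁
  have hBsub : B ⊆ S₁ := by
    rintro d ⟨hd, hlt⟩
    rw [hodds]
    refine ⟨odd_of_dvd_odd hd hq, hd, ?_⟩
    calc d * d ≤ 2 ^ s * (d * d) := Nat.le_mul_of_pos_left _ (by omega)
      _ < q := hlt
      _ ≤ 2 ^ s * q := Nat.le_mul_of_pos_left _ (by omega)
  -- B = S₁ from balancedness
  have hinj : Function.Injective (fun d : ℕ => 2 ^ s * d) := fun x y h => by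
    simpa using Nat.eq_of_mul_eq_mul_left (by omega) h
  have hcard : S₁.encard ≤ B.encard := by
    have h1 : (evens (lspec n)).encard = B.encard := by
      rw [hevens]; exact hinj.encard_image B
    rw [balancedSet] at hb
    rw [← hb, h1]
  have hBS : B = S₁ := hfin.eq_of_subset_of_encard_le' hBsub hcard
  -- pairing: complementary divisor of a non-member is a member
  have hpair : ∀ d, d ∣ q → d ∉ S₁ → q / d ∈ S₁ := by
    intro d hd hdn
    have hd0 : 0 < d := Nat.pos_of_dvd_of_pos hd hq0
    have hdodd : Odd d := odd_of_dvd_odd hd hq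
    have hge : 2 ^ s * q < d * d := by
      rcases Nat.lt_trichotomy (d * d) (2 ^ s * q) with h | h | h
      · exact absurd (by rw [hodds]; exact ⟨hdodd, hd, h⟩) hdn
      · exfalso
        have : Odd (d * d) := hdodd.mul hdodd
        have he : Even (2 ^ s * q) :=
          (even_iff_two_dvd.mpr (dvd_mul_of_dvd_left (dvd_pow_self 2 (by omega)) q))
        rw [h] at this
        simp [Nat.even_iff, Nat.odd_iff] at this he
        omega
      · exact h
    set e := q / d with he
    have hqde : q = d * e := (Nat.mul_div_cancel' hd).symm
    have he0 : 0 < e := by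
      rcases Nat.eq_zero_or_pos e with h0 | h
      · rw [h0] at hqde; omega
      · exact h
    rw [← hBS]
    refine ⟨Nat.div_dvd_of_dvd hd, ?_⟩
    have h1 : d * (2 ^ s * e) < d * d := by
      calc d * (2 ^ s * e) = 2 ^ s * (d * e) := by ring
        _ = 2 ^ s * q := by rw [← hqde]
        _ < d * d := hge
    have h2 : 2 ^ s * e < d := Nat.lt_of_mul_lt_mul_left h1
    calc 2 ^ s * (e * e) = (2 ^ s * e) * e := by ring
      _ < d * e := (Nat.mul_lt_mul_right he0).mpr h2
      _ = q := hqde.symm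
  -- main quantities
  set a := q / m₁ with ha
  have hqa : q = m₁ * a := (Nat.mul_div_cancel' hm₁dvd).symm
  have hBm₁ : 2 ^ s * (m₁ * m₁) < q := by
    have := hm₁mem; rw [← hBS] at this; exact this.2
  have hma : 2 ^ s * m₁ < a := by
    have h1 : m₁ * (2 ^ s * m₁) < m₁ * a := by
      calc m₁ * (2 ^ s * m₁) = 2 ^ s * (m₁ * m₁) := by ring
        _ < q := hBm₁
        _ = m₁ * a := hqa
    exact Nat.lt_of_mul_lt_mul_left h1
  have hm₁a : m₁ < a := by
    calc m₁ ≤ 2 ^ s * m₁ := Nat.le_mul_of_pos_left _ (by omega)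
      _ < a := hma
  have hdivset : {d | d ∣ q ∧ d < a} = S₁ := by
    ext d
    simp only [Set.mem_setOf_eq]
    constructor
    · rintro ⟨hd, hda⟩
      by_contra hdn
      have heS : q / d ∈ S₁ := hpair d hd hdn
      have hele : q / d ≤ m₁ := le_csSup hbdd heS
      have hd0 : 0 < d := Nat.pos_of_dvd_of_pos hd hq0
      have hqde : q = d * (q / d) := (Nat.mul_div_cancel' hd).symm
      have : q < q := by
        calc q = d * (q / d) := hqde
          _ ≤ d * m₁ := Nat.mul_le_mul_left d hele
          _ < a * m₁ := (Nat.mul_lt_mul_right hm₁0).mpr hda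
          _ = m₁ * a := by ring
          _ = q := hqa.symm
      omega
    · intro hdS
      have hdle : d ≤ m₁ := le_csSup hbdd hdS
      rw [hodds] at hdS
      exact ⟨hdS.2.1, lt_of_le_of_lt hdle hm₁a⟩
  have hm₀ : sSup (evens (lspec n)) = 2 ^ s * m₁ := by
    have himg : evens (lspec n) = (fun d => 2 ^ s * d) '' S₁ := by rw [hevens, hBS]
    apply le_antisymm
    · apply csSup_le
      · rw [himg]; exact (Set.Nonempty.image _ hne)
      · rintro x hx
        rw [himg] at hx
        obtain ⟨d, hd, rfl⟩ := hx
        exact Nat.mul_le_mul_left _ (le_csSup hbdd hd)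
    · apply le_csSup
      · refine ⟨2 ^ s * m₁, ?_⟩
        rintro x hx
        rw [himg] at hx
        obtain ⟨d, hd, rfl⟩ := hx
        exact Nat.mul_le_mul_left _ (le_csSup hbdd hd)
      · rw [himg]; exact ⟨m₁, hm₁mem, rfl⟩
  exact ⟨hm₁mem, hBS.symm, hqa, hma, hdivset, hm₀⟩





/-- If `S = lspec n` is balanced and `m₀ = max S₀`, then
`(m₀/2)·E(S) ⊆ L(n) ⊆ (m₀/2)·(P(S) ∪ E(S))`. -/
theorem specClass_between (n : ℕ) (hn : 0 < n) (hb : balancedSet (lspec n)) :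
    (fun a => sSup (evens (lspec n)) / 2 * a) '' excSet (lspec n) ⊆ specClass n ∧
      specClass n ⊆
        (fun a => sSup (evens (lspec n)) / 2 * a) ''
          (primesAbove (lspec n) ∪ excSet (lspec n)) := by
  constructor
  · -- left inclusion
    rintro x ⟨a, ⟨⟨b, hbS, c, hcS, habc⟩, haGT, hEdiv⟩, rfl⟩
    obtain ⟨s, q, hs, hq, h2n⟩ := exists_two_pow n hn
    obtain ⟨hm₁mem, hBS, hqa, hma, hdivset, hm₀⟩ := balanced_structure hn hs hq h2n hb
    set m₁ := sSup (odds (lspec n)) with hm₁def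
    have hm₁odd : Odd m₁ := hm₁mem.2
    have hm₁0 : 0 < m₁ := hm₁odd.pos
    have haodd : Odd a := habc ▸ (hbS.2.mul hcS.2)
    have ha0 : 0 < a := haodd.pos
    rw [hm₀] at haGT
    obtain ⟨t, rfl⟩ : ∃ t, s = t + 1 := ⟨s - 1, by omega⟩
    set r := m₁ * a with hrdef
    have hr : Odd r := hm₁odd.mul haodd
    have hr0 : 0 < r := hr.pos
    set m := 2 ^ t * r with hmdef
    have hm0 : 0 < m := by positivity
    have h2m : 2 * m = 2 ^ (t + 1) * r := by rw [hmdef]; ring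
    have hval : sSup (evens (lspec n)) / 2 * a = m := by
      rw [hm₀]
      have h1 : 2 ^ (t + 1) * m₁ = 2 * (2 ^ t * m₁) := by ring
      rw [h1, Nat.mul_div_cancel_left _ (by norm_num : 0 < 2), hmdef, hrdef]
      ring
    have hm₁a : m₁ < a := by
      calc m₁ ≤ 2 ^ (t + 1) * m₁ := Nat.le_mul_of_pos_left _ (by positivity)
        _ < a := haGT
    -- bounded above
    have hbdd : BddAbove (odds (lspec n)) := by
      refine ⟨a, fun y hy => ?_⟩
      rw [← hEdiv] at hy
      exact hy.2.le
    have hOm : odds (lspec m) = odds (lspec n) := by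
      rw [odds_lspec_eq hm0 (by omega) hr h2m]
      ext l
      simp only [Set.mem_setOf_eq]
      constructor
      · rintro ⟨hlo, hld, hlsq⟩
        rw [← hEdiv]
        refine ⟨hld, ?_⟩
        by_contra hla
        push_neg at hla
        have : 2 ^ (t + 1) * r < l * l := by
          calc 2 ^ (t + 1) * r = (2 ^ (t + 1) * m₁) * a := by rw [hrdef]; ring
            _ < a * a := (Nat.mul_lt_mul_right ha0).mpr haGT
            _ ≤ l * l := Nat.mul_le_mul hla hla
        omega
      · intro hl
        have hlm₁ : l ≤ m₁ := le_csSup hbdd hl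
        have hl' := hl
        rw [← hEdiv] at hl'
        refine ⟨hl.2, hl'.1, ?_⟩
        calc l * l ≤ m₁ * m₁ := Nat.mul_le_mul hlm₁ hlm₁
          _ < m₁ * a := (Nat.mul_lt_mul_left hm₁0).mpr hm₁a
          _ = r := rfl
          _ ≤ 2 ^ (t + 1) * r := Nat.le_mul_of_pos_left _ (by positivity)
    have hinner : {d | d ∣ r ∧ 2 ^ (t + 1) * (d * d) < r} = odds (lspec n) := by
      ext d
      simp only [Set.mem_setOf_eq]
      constructor
      · rintro ⟨hld, hlsq⟩
        rw [← hEdiv]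
        refine ⟨hld, ?_⟩
        by_contra hla
        push_neg at hla
        have : r < 2 ^ (t + 1) * (d * d) := by
          calc r = m₁ * a := rfl
            _ < a * a := (Nat.mul_lt_mul_right ha0).mpr hm₁a
            _ ≤ d * d := Nat.mul_le_mul hla hla
            _ ≤ 2 ^ (t + 1) * (d * d) := Nat.le_mul_of_pos_left _ (by positivity)
        omega
      · intro hd
        have hdm₁ : d ≤ m₁ := le_csSup hbdd hd
        have hd' := hd
        rw [← hEdiv] at hd'
        refine ⟨hd'.1, ?_⟩
        calc 2 ^ (t + 1) * (d * d) ≤ 2 ^ (t + 1) * (m₁ * m₁) :=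
              Nat.mul_le_mul_left _ (Nat.mul_le_mul hdm₁ hdm₁)
          _ = (2 ^ (t + 1) * m₁) * m₁ := by ring
          _ < a * m₁ := (Nat.mul_lt_mul_right hm₁0).mpr haGT
          _ = r := by rw [hrdef]; ring
    have hEm : evens (lspec m) = evens (lspec n) := by
      rw [evens_lspec_eq hm0 (by omega) hr h2m,
          evens_lspec_eq hn (by omega) hq h2n, ← hBS, hinner]
    show sSup (evens (lspec n)) / 2 * a ∈ specClass n
    rw [hval]
    refine ⟨hm0, ?_⟩
    rw [← odds_union_evens (lspec m), ← odds_union_evens (lspec n), hOm, hEm]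
  · -- right inclusion
    rintro m ⟨hm0, hlm⟩
    obtain ⟨s, q, hs, hq, h2m⟩ := exists_two_pow m hm0
    have hb' : balancedSet (lspec m) := by rw [hlm]; exact hb
    obtain ⟨hm₁mem, hBS, hqa, hma, hdivset, hm₀⟩ := balanced_structure hm0 hs hq h2m hb'
    rw [hlm] at hm₁mem hBS hqa hma hdivset hm₀
    set m₁ := sSup (odds (lspec n)) with hm₁def
    set a := q / m₁ with hadef
    have hm₁odd : Odd m₁ := hm₁mem.2
    have hm₁0 : 0 < m₁ := hm₁odd.pos
    have haq : a ∣ q := ⟨m₁, by rw [hqa]; ring⟩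
    have h2s : 2 ≤ 2 ^ s := by
      calc 2 = 2 ^ 1 := rfl
      _ ≤ 2 ^ s := Nat.pow_le_pow_right (by norm_num) hs
    have ha2 : 2 < a := by
      have : 2 ≤ 2 ^ s * m₁ := by
        calc 2 ≤ 2 ^ s := h2s
          _ ≤ 2 ^ s * m₁ := Nat.le_mul_of_pos_right _ hm₁0
      omega
    refine ⟨a, ?_, ?_⟩
    · by_cases hap : a.Prime
      · exact Or.inl ⟨hap, by rw [hm₀]; exact hma⟩
      · refine Or.inr ⟨?_, by rw [hm₀]; exact hma, ?_⟩
        · obtain ⟨b, hba, hb2, hblt⟩ := Nat.exists_dvd_of_not_prime2 (by omega) hap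
          set c := a / b with hcdef
          have habc : a = b * c := (Nat.mul_div_cancel' hba).symm
          have hca : c ∣ a := Nat.div_dvd_of_dvd hba
          have hclt : c < a := Nat.div_lt_self (by omega) (by omega)
          refine ⟨b, ?_, c, ?_, habc⟩
          · rw [← hdivset]
            exact ⟨hba.trans haq, hblt⟩
          · rw [← hdivset]
            exact ⟨hca.trans haq, hclt⟩
        · rw [← hm₁def, ← hqa]
          exact hdivset
    · -- value equality
      show sSup (evens (lspec n)) / 2 * a = m
      rw [hm₀]
      obtain ⟨t, rfl⟩ : ∃ t, s = t + 1 := ⟨s - 1, by omega⟩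
      have h1 : 2 ^ (t + 1) * m₁ = 2 * (2 ^ t * m₁) := by ring
      rw [h1, Nat.mul_div_cancel_left _ (by norm_num : 0 < 2)]
      have h2 : 2 ^ t * m₁ * a = 2 ^ t * q := by rw [hqa]; ring
      rw [h2]
      have h3 : 2 ^ (t + 1) * q = 2 * (2 ^ t * q) := by ring
      omega
end
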